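/- Let 𝒜 be a central hyperplane arrangement in a finite-dimensional real vector space V with |𝒜| ≥ 3. Suppose there is no H ∈ 𝒜 such that 𝒜 = (𝒜 − {H}) ⊎ {H}, i.e. no H ∈ 𝒜 with r(𝒜) = r(𝒜 − {H}) + 1 (this holds in particular when 𝒜 is indecomposable). Then every bijection f : Ch(𝒜) → Ch(𝒜) satisfying IIA other than the identity has Hamming distance at least 2 from the identity; that is, if f ≠ id then there are at least two hyperplanes H ∈ 𝒜 for which the associated map φ_H is the transposition of Ch({H}) rather than the identity. -/

import Mathlib

open Set

section Arrangement

variable {V : Type*} [NormedAddCommGroup V] [NormedSpace ℝ V]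

/-- A (linear) hyperplane: the kernel of a nonzero linear functional. -/
def IsHyperplane (H : Submodule ℝ V) : Prop :=
  ∃ f : V →ₗ[ℝ] ℝ, f ≠ 0 ∧ LinearMap.ker f = H

/-- A central hyperplane arrangement: a finite set of linear hyperplanes. -/
def IsCentralArrangement (𝒜 : Finset (Submodule ℝ V)) : Prop :=
  ∀ H ∈ 𝒜, IsHyperplane H

/-- The complement of the union of the hyperplanes of `𝒜`. -/
def arrComplement (𝒜 : Finset (Submodule ℝ V)) : Set V :=
  {x | ∀ H ∈ 𝒜, x ∉ H}

/-- The set of chambers of `𝒜`: connected components of the complement. -/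
def Chambers (𝒜 : Finset (Submodule ℝ V)) : Set (Set V) :=
  {c | ∃ x ∈ arrComplement 𝒜, c = connectedComponentIn (arrComplement 𝒜) x}

/-- A chamber of `𝒜`. -/
abbrev Chamber (𝒜 : Finset (Submodule ℝ V)) := ↥(Chambers 𝒜)

/-- A chosen point of a chamber. -/
noncomputable def Chamber.pt {𝒜 : Finset (Submodule ℝ V)} (c : Chamber 𝒜) : V :=
  c.2.choose

lemma Chamber.pt_mem {𝒜 : Finset (Submodule ℝ V)} (c : Chamber 𝒜) :
    c.pt ∈ arrComplement 𝒜 := c.2.choose_spec.1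

/-- `ε_H` : the chamber of the one-hyperplane arrangement `{H}` containing a
given chamber of `𝒜` (for `H ∈ 𝒜`). -/
noncomputable def epsC {𝒜 : Finset (Submodule ℝ V)} (H : Submodule ℝ V) (hH : H ∈ 𝒜)
    (c : Chamber 𝒜) : Chamber ({H} : Finset (Submodule ℝ V)) :=
  ⟨connectedComponentIn (arrComplement ({H} : Finset (Submodule ℝ V))) c.pt, by
    refine ⟨c.pt, ?_, rfl⟩
    intro H' hH'
    rw [Finset.mem_singleton] at hH'
    subst hH'
    exact c.pt_mem _ hH⟩

/-- IIA for a map `Ch(𝒜)^m → Ch(𝒜)^l`. -/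
def SatisfiesIIA {𝒜 : Finset (Submodule ℝ V)} {m l : ℕ}
    (Φ : (Fin m → Chamber 𝒜) → (Fin l → Chamber 𝒜)) : Prop :=
  ∀ (H : Submodule ℝ V) (hH : H ∈ 𝒜),
    ∃ φ : (Fin m → Chamber ({H} : Finset (Submodule ℝ V))) →
          (Fin l → Chamber ({H} : Finset (Submodule ℝ V))),
      ∀ c : Fin m → Chamber 𝒜,
        φ (fun i => epsC H hH (c i)) = fun j => epsC H hH (Φ c j)

/-- IIA for a map `Ch(𝒜)^m → Ch(𝒜)`. -/
def SatisfiesIIA1 {𝒜 : Finset (Submodule ℝ V)} {m : ℕ}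
    (Φ : (Fin m → Chamber 𝒜) → Chamber 𝒜) : Prop :=
  ∀ (H : Submodule ℝ V) (hH : H ∈ 𝒜),
    ∃ φ : (Fin m → Chamber ({H} : Finset (Submodule ℝ V))) →
          Chamber ({H} : Finset (Submodule ℝ V)),
      ∀ c : Fin m → Chamber 𝒜,
        φ (fun i => epsC H hH (c i)) = epsC H hH (Φ c)

/-- IIA for a map `Ch(𝒜) → Ch(𝒜)`. -/
def SatisfiesIIAone {𝒜 : Finset (Submodule ℝ V)}
    (f : Chamber 𝒜 → Chamber 𝒜) : Prop :=
  ∀ (H : Submodule ℝ V) (hH : H ∈ 𝒜),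
    ∃ φ : Chamber ({H} : Finset (Submodule ℝ V)) → Chamber ({H} : Finset (Submodule ℝ V)),
      ∀ c : Chamber 𝒜, φ (epsC H hH c) = epsC H hH (f c)

/-- Pareto property. -/
def SatisfiesPAR {𝒜 : Finset (Submodule ℝ V)} {m : ℕ}
    (Φ : (Fin m → Chamber 𝒜) → Chamber 𝒜) : Prop :=
  ∀ c : Chamber 𝒜, Φ (fun _ => c) = c

/-- Admissible map: IIA and PAR. -/
def Admissible {𝒜 : Finset (Submodule ℝ V)} {m : ℕ}
    (Φ : (Fin m → Chamber 𝒜) → Chamber 𝒜) : Prop :=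
  SatisfiesIIA1 Φ ∧ SatisfiesPAR Φ

/-- The rank `r(𝒜) = dim V − dim ⋂_{H ∈ 𝒜} H`. -/
noncomputable def arrRank (𝒜 : Finset (Submodule ℝ V)) : ℕ :=
  Module.finrank ℝ V - Module.finrank ℝ ↥(𝒜.inf id)

/-- Decomposability of a central arrangement. -/
def Decomposable (𝒜 : Finset (Submodule ℝ V)) : Prop :=
  ∃ (n : ℕ) (parts : Fin n → Finset (Submodule ℝ V)),
    2 ≤ n ∧
    (∀ i, (parts i).Nonempty) ∧
    (∀ i j H, H ∈ parts i → H ∈ parts j → i = j) ∧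
    (∀ H, H ∈ 𝒜 ↔ ∃ i, H ∈ parts i) ∧
    arrRank 𝒜 = ∑ i, arrRank (parts i)

/-- A dependent subarrangement: `r(ℬ) < |ℬ|`. -/
def Dependent (ℬ : Finset (Submodule ℝ V)) : Prop := arrRank ℬ < ℬ.card

/-- A circuit: a minimal dependent subarrangement. -/
def IsCircuit (ℬ : Finset (Submodule ℝ V)) : Prop :=
  Dependent ℬ ∧ ∀ ℬ' ⊆ ℬ, Dependent ℬ' → ℬ' = ℬ

/-- The graph `Γ(𝒜)`: vertices are the hyperplanes of `𝒜`, with an edge between two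
distinct hyperplanes iff some circuit of `𝒜` contains both. -/
def circuitGraph (𝒜 : Finset (Submodule ℝ V)) : SimpleGraph {H // H ∈ 𝒜} where
  Adj H H' := H ≠ H' ∧ ∃ ℬ ⊆ 𝒜, IsCircuit ℬ ∧ H.1 ∈ ℬ ∧ H'.1 ∈ ℬ
  symm := by
    constructor
    rintro a b ⟨hne, ℬ, hsub, hcirc, ha, hb⟩
    exact ⟨hne.symm, ℬ, hsub, hcirc, hb, ha⟩
  loopless := by
    constructor
    rintro a ⟨h, -⟩
    exact h rfl

/-- `H` separates a set `T ⊆ Ch(𝒜)^m` if the image of `T` under `(ε_H)^m` has at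
least two elements. -/
def SeparationOf {𝒜 : Finset (Submodule ℝ V)} {m : ℕ} (H : Submodule ℝ V) (hH : H ∈ 𝒜)
    (T : Set (Fin m → Chamber 𝒜)) : Prop :=
  ∃ t₁ ∈ T, ∃ t₂ ∈ T,
    (fun i => epsC H hH (t₁ i)) ≠ (fun i => epsC H hH (t₂ i))

end Arrangement

/-!
For a surjective IIA map each `φ_H` is a surjection of the two-element set `Ch({H})` (because
`ε_H` is onto), hence the identity or the transposition. A map `f ≠ id` moves some chamber, so
some `φ_{H₁}` is the transposition. Suppose every other `φ_H` is the identity. Since `H₁` does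
not split off, `⋂_{H ≠ H₁} H ⊆ H₁`, so a defining form `g` of `H₁` is a combination
`∑ b_k L_k` of linearly independent defining forms of other hyperplanes. On the nonempty open
cone where every `b_k L_k` with `b_k ≠ 0` is positive, the signs of the `L_k` force `g > 0`; a
chamber `c` in that cone and `f c` lie on the same side of every `H ≠ H₁`, hence also of `H₁`,
contradicting that `φ_{H₁}` swaps them.
-/

lemma pos_mul_of_pos_mul_of_pos_mul {a b c : ℝ} (hab : 0 < a * b) (hbc : 0 < b * c) :
    0 < a * c := by
  nlinarith [mul_pos hab hbc, sq_nonneg b]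

lemma pos_mul_or_pos_mul_of_not_pos_mul {a b c : ℝ} (ha : a ≠ 0) (hb : b ≠ 0) (hc : c ≠ 0)
    (hab : ¬ 0 < a * b) : 0 < c * a ∨ 0 < c * b := by
  rcases ha.lt_or_gt with ha | ha <;> rcases hb.lt_or_gt with hb | hb <;>
    rcases hc.lt_or_gt with hc | hc <;>
    first
    | exact absurd (by nlinarith) hab
    | exact Or.inl (by nlinarith)
    | exact Or.inr (by nlinarith)

lemma Function.Surjective.eq_id_of_isFixedPt {α : Type*}
    (hα : ∀ a b : α, a ≠ b → ∀ c, c = a ∨ c = b) {φ : α → α} (hφ : φ.Surjective) {a : α}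
    (ha : φ.IsFixedPt a) : φ = id := by
  funext b
  by_contra hb
  have hab : a ≠ b := fun h => hb (h ▸ ha)
  have hφb : φ b = a := (hα a b hab (φ b)).resolve_right hb
  obtain ⟨c, hc⟩ := hφ b
  rcases hα a b hab c with rfl | rfl
  · exact hab (ha.symm.trans hc)
  · exact hab (hφb.symm.trans hc)

lemma connectedComponentIn_eq_connectedComponentIn_iff {X : Type*} [TopologicalSpace X]
    {F : Set X} {x y : X} (hy : y ∈ F) :
    connectedComponentIn F x = connectedComponentIn F y ↔ y ∈ connectedComponentIn F x :=
  ⟨fun h => h ▸ mem_connectedComponentIn hy, connectedComponentIn_eq⟩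

lemma LinearIndependent.exists_forall_apply_eq {K W κ : Type*} [Field K] [AddCommGroup W]
    [Module K W] [Fintype κ] {L : κ → W →ₗ[K] K} (hL : LinearIndependent K L) (b : κ → K) :
    ∃ x, ∀ k, L k x = b k := by
  classical
  suffices Function.Injective (LinearMap.pi L).dualMap from
    (LinearMap.dualMap_injective_iff.1 this b).imp fun x hx k => congr_fun hx k
  refine (injective_iff_map_eq_zero _).2 fun μ hμ => LinearMap.pi_ext' fun k => ?_
  have hcomb : ∑ k, μ (Pi.single k 1) • L k = 0 := by
    ext x
    have := LinearMap.congr_fun hμ x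
    rw [LinearMap.dualMap_apply, LinearMap.pi_apply_eq_sum_univ] at this
    have hsingle (i : κ) : (fun j => if i = j then (1 : K) else 0) = Pi.single i 1 := by
      ext j; simp [Pi.single_apply, eq_comm]
    simpa [hsingle, mul_comm] using this
  ext
  simpa using Fintype.linearIndependent_iff.1 hL _ hcomb k

section

variable {V : Type*} [NormedAddCommGroup V] [NormedSpace ℝ V]

lemma convex_setOf_pos_mul (g : V →ₗ[ℝ] ℝ) (a : ℝ) : Convex ℝ {z | 0 < a * g z} :=
  convex_halfSpace_gt (a • g).isLinear 0

lemma connectedComponentIn_setOf_ne_zero [FiniteDimensional ℝ V] (g : V →ₗ[ℝ] ℝ) {x : V}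
    (hx : g x ≠ 0) : connectedComponentIn {z | g z ≠ 0} x = {z | 0 < g x * g z} := by
  refine subset_antisymm (fun z hz => ?_) ?_
  · have hpre : IsPreconnected (g '' connectedComponentIn {z | g z ≠ 0} x) :=
      isPreconnected_connectedComponentIn.image _
        g.continuous_of_finiteDimensional.continuousOn
    have hzero : (0 : ℝ) ∉ g '' connectedComponentIn {z | g z ≠ 0} x := by
      rintro ⟨w, hw, hw0⟩
      exact connectedComponentIn_subset _ _ hw hw0
    by_contra hneg
    have hneg : g x * g z ≤ 0 := not_lt.1 hneg
    refine hzero (hpre.ordConnected.uIcc_subset (mem_image_of_mem g (mem_connectedComponentIn hx))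
      (mem_image_of_mem g hz) (Set.mem_uIcc.2 ?_))
    rcases hx.lt_or_gt with h | h
    · exact Or.inl ⟨h.le, by nlinarith⟩
    · exact Or.inr ⟨by nlinarith, h.le⟩
  · exact (convex_setOf_pos_mul g (g x)).isPreconnected.subset_connectedComponentIn
      (mul_self_pos.2 hx) fun z hz h0 => by simp [h0] at hz

lemma Submodule.dense_compl_of_ne_top {H : Submodule ℝ V} (hH : H ≠ ⊤) :
    Dense (H : Set V)ᶜ :=
  interior_eq_empty_iff_dense_compl.1 <| Set.not_nonempty_iff_eq_empty.1 fun h =>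
    hH (H.eq_top_of_nonempty_interior' h)

lemma exists_isOpen_forall_pos_of_iInf_ker_le_ker [FiniteDimensional ℝ V] {ι : Type*} [Finite ι]
    {L : ι → V →ₗ[ℝ] ℝ} {g : V →ₗ[ℝ] ℝ} (hg0 : g ≠ 0)
    (hg : ⨅ i, LinearMap.ker (L i) ≤ LinearMap.ker g) :
    ∃ U : Set V, IsOpen U ∧ U.Nonempty ∧ ∀ x ∈ U, ∀ y, (∀ i, 0 < L i x * L i y) → 0 < g y := by
  obtain ⟨κ, a, ha, hspan, hli⟩ := exists_linearIndependent' ℝ L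
  have := Finite.of_injective a ha
  have := Fintype.ofFinite κ
  obtain ⟨b, hb⟩ := (Submodule.mem_span_range_iff_exists_fun ℝ).1
    (hspan ▸ mem_span_of_iInf_ker_le_ker hg)
  obtain ⟨x₀, hx₀⟩ := hli.exists_forall_apply_eq b
  refine ⟨{x | ∀ k, b k ≠ 0 → 0 < b k * L (a k) x}, ?_, ⟨x₀, fun k hk => ?_⟩, fun x hx y hy => ?_⟩
  · simp only [ofPred_forall]
    exact isOpen_iInter_of_finite fun k => isOpen_iInter_of_finite fun _ =>
      isOpen_lt continuous_const (continuous_const.mul (L (a k)).continuous_of_finiteDimensional)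
  · rw [← Function.comp_apply (f := L), hx₀ k]
    exact mul_self_pos.2 hk
  · have hterm (k : κ) : 0 ≤ b k * L (a k) y := by
      by_cases hk : b k = 0
      · simp [hk]
      · exact (pos_mul_of_pos_mul_of_pos_mul (hx k hk) (hy (a k))).le
    obtain ⟨k, hk⟩ : ∃ k, b k ≠ 0 := by
      by_contra! h
      exact hg0 (by simp [← hb, h])
    rw [← hb]
    simp only [LinearMap.coe_sum, Finset.sum_apply, LinearMap.smul_apply, Function.comp_apply,
      smul_eq_mul]
    exact Finset.sum_pos' (fun k _ => hterm k) ⟨k, Finset.mem_univ k,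
      pos_mul_of_pos_mul_of_pos_mul (hx k hk) (hy (a k))⟩

lemma IsHyperplane.ne_top {H : Submodule ℝ V} (hH : IsHyperplane H) : H ≠ ⊤ := by
  obtain ⟨g, hg0, rfl⟩ := hH
  exact fun h => hg0 (LinearMap.ker_eq_top.1 h)

lemma arrRank_eq_arrRank_erase_add_one [FiniteDimensional ℝ V] [DecidableEq (Submodule ℝ V)]
    {𝒜 : Finset (Submodule ℝ V)} {H : Submodule ℝ V} (hH : IsHyperplane H) (hH𝒜 : H ∈ 𝒜)
    (hK : ¬ (𝒜.erase H).inf id ≤ H) : arrRank 𝒜 = arrRank (𝒜.erase H) + 1 := by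
  obtain ⟨g, hg0, rfl⟩ := hH
  set K := (𝒜.erase (LinearMap.ker g)).inf id
  have hinf : 𝒜.inf id = LinearMap.ker g ⊓ K := by
    conv_lhs => rw [← Finset.insert_erase hH𝒜]
    exact Finset.inf_insert
  have hsup : LinearMap.ker g ⊔ K = ⊤ :=
    codisjoint_iff.1 <| (LinearMap.isCoatom_ker_of_surjective
      (LinearMap.surjective hg0)).not_le_iff_codisjoint.1 hK
  have hdim := Submodule.finrank_sup_add_finrank_inf_eq (LinearMap.ker g) K
  rw [hsup, finrank_top, ← Module.Dual.finrank_ker_add_one_of_ne_zero hg0] at hdim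
  have hKV := K.finrank_le
  change _ - Module.finrank ℝ ↥(𝒜.inf id) = Module.finrank ℝ V - Module.finrank ℝ K + 1
  rw [hinf]
  omega

lemma dense_arrComplement [FiniteDimensional ℝ V] {𝒜 : Finset (Submodule ℝ V)}
    (h𝒜 : IsCentralArrangement 𝒜) : Dense (arrComplement 𝒜) := by
  have h : arrComplement 𝒜 = ⋂ H ∈ (𝒜 : Set (Submodule ℝ V)), (H : Set V)ᶜ := by
    ext x; simp [arrComplement]
  rw [h]
  exact dense_biInter_of_isOpen (fun H _ => H.closed_of_finiteDimensional.isOpen_compl)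
    𝒜.countable_toSet fun H hH => Submodule.dense_compl_of_ne_top (h𝒜 H hH).ne_top

lemma arrComplement_singleton_ker (g : V →ₗ[ℝ] ℝ) :
    arrComplement ({LinearMap.ker g} : Finset (Submodule ℝ V)) = {z | g z ≠ 0} := by
  ext z; simp [arrComplement]

lemma connectedComponentIn_arrComplement_subset {𝒜 : Finset (Submodule ℝ V)}
    {H : Submodule ℝ V} (hH : H ∈ 𝒜) (x : V) :
    connectedComponentIn (arrComplement 𝒜) x ⊆
      connectedComponentIn (arrComplement ({H} : Finset (Submodule ℝ V))) x :=
  connectedComponentIn_mono x fun _ hz H' hH' => hz H' (Finset.mem_singleton.1 hH' ▸ hH)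

lemma pos_mul_of_mem_connectedComponentIn [FiniteDimensional ℝ V]
    {𝒜 : Finset (Submodule ℝ V)} {g : V →ₗ[ℝ] ℝ} (hg : LinearMap.ker g ∈ 𝒜) {x y : V}
    (hy : y ∈ connectedComponentIn (arrComplement 𝒜) x) : 0 < g x * g y := by
  have hx : g x ≠ 0 := fun h0 =>
    connectedComponentIn_nonempty_iff.1 ⟨y, hy⟩ _ hg (LinearMap.mem_ker.2 h0)
  have := connectedComponentIn_arrComplement_subset hg x hy
  rwa [arrComplement_singleton_ker, connectedComponentIn_setOf_ne_zero g hx] at this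

namespace Chamber

variable {𝒜 : Finset (Submodule ℝ V)}

lemma coe_eq (c : Chamber 𝒜) : (c : Set V) = connectedComponentIn (arrComplement 𝒜) c.pt :=
  c.2.choose_spec.2

lemma pt_mem_coe (c : Chamber 𝒜) : c.pt ∈ (c : Set V) :=
  c.coe_eq ▸ mem_connectedComponentIn c.pt_mem

lemma eq_iff_pt_mem {c d : Chamber 𝒜} : c = d ↔ d.pt ∈ (c : Set V) := by
  rw [Subtype.ext_iff, c.coe_eq, d.coe_eq]
  exact connectedComponentIn_eq_connectedComponentIn_iff d.pt_mem

def ofMem (x : V) (hx : x ∈ arrComplement 𝒜) : Chamber 𝒜 :=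
  ⟨connectedComponentIn (arrComplement 𝒜) x, x, hx, rfl⟩

lemma pt_ofMem_mem {x : V} (hx : x ∈ arrComplement 𝒜) :
    (ofMem x hx).pt ∈ connectedComponentIn (arrComplement 𝒜) x :=
  (ofMem x hx).pt_mem_coe

lemma coe_singleton_ker [FiniteDimensional ℝ V] {g : V →ₗ[ℝ] ℝ}
    (e : Chamber ({LinearMap.ker g} : Finset (Submodule ℝ V))) :
    (e : Set V) = {z | 0 < g e.pt * g z} := by
  have he := e.pt_mem
  rw [arrComplement_singleton_ker] at he
  rw [e.coe_eq, arrComplement_singleton_ker, connectedComponentIn_setOf_ne_zero g he]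

lemma eq_iff_of_singleton_ker [FiniteDimensional ℝ V] {g : V →ₗ[ℝ] ℝ}
    {e e' : Chamber ({LinearMap.ker g} : Finset (Submodule ℝ V))} :
    e = e' ↔ 0 < g e.pt * g e'.pt := by
  rw [eq_iff_pt_mem, coe_singleton_ker]; rfl

lemma eq_or_eq_of_ne [FiniteDimensional ℝ V] {H : Submodule ℝ V} (hH : IsHyperplane H)
    {d₁ d₂ : Chamber ({H} : Finset (Submodule ℝ V))} (h : d₁ ≠ d₂)
    (e : Chamber ({H} : Finset (Submodule ℝ V))) : e = d₁ ∨ e = d₂ := by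
  obtain ⟨g, -, rfl⟩ := hH
  have hne (d : Chamber ({LinearMap.ker g} : Finset (Submodule ℝ V))) : g d.pt ≠ 0 := by
    simpa [arrComplement_singleton_ker] using d.pt_mem
  rw [Ne, eq_iff_of_singleton_ker] at h
  rw [eq_iff_of_singleton_ker, eq_iff_of_singleton_ker]
  exact pos_mul_or_pos_mul_of_not_pos_mul (hne d₁) (hne d₂) (hne e) h

end Chamber

lemma pt_mem_epsC {𝒜 : Finset (Submodule ℝ V)} {H : Submodule ℝ V} (hH : H ∈ 𝒜)
    (c : Chamber 𝒜) : c.pt ∈ (epsC H hH c : Set V) :=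
  mem_connectedComponentIn fun _ hH' => Finset.mem_singleton.1 hH' ▸ c.pt_mem H hH

variable [FiniteDimensional ℝ V] {𝒜 : Finset (Submodule ℝ V)}

lemma coe_epsC {g : V →ₗ[ℝ] ℝ} (hg : LinearMap.ker g ∈ 𝒜) (c : Chamber 𝒜) :
    (epsC _ hg c : Set V) = {z | 0 < g c.pt * g z} := by
  have hc : g c.pt ≠ 0 := fun h0 => c.pt_mem _ hg (LinearMap.mem_ker.2 h0)
  change connectedComponentIn _ c.pt = _
  rw [arrComplement_singleton_ker, connectedComponentIn_setOf_ne_zero g hc]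

lemma epsC_eq_epsC_iff {H : Submodule ℝ V} (hH : H ∈ 𝒜) {g : V →ₗ[ℝ] ℝ}
    (hgH : LinearMap.ker g = H) {c d : Chamber 𝒜} :
    epsC H hH c = epsC H hH d ↔ 0 < g c.pt * g d.pt := by
  subst hgH
  rw [Subtype.ext_iff]
  change connectedComponentIn _ c.pt = connectedComponentIn _ d.pt ↔ _
  rw [connectedComponentIn_eq_connectedComponentIn_iff
    fun _ h' => Finset.mem_singleton.1 h' ▸ d.pt_mem _ hH]
  exact Set.ext_iff.1 (coe_epsC hH c) d.pt

lemma epsC_surjective (h𝒜 : IsCentralArrangement 𝒜) {H : Submodule ℝ V} (hH : H ∈ 𝒜) :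
    (epsC H hH).Surjective := by
  intro e
  obtain ⟨g, -, rfl⟩ := h𝒜 H hH
  have he : IsOpen (e : Set V) := by
    rw [e.coe_singleton_ker]
    exact isOpen_lt continuous_const (continuous_const.mul g.continuous_of_finiteDimensional)
  obtain ⟨x, hxe, hx⟩ := (dense_arrComplement h𝒜).inter_open_nonempty _ he ⟨e.pt, e.pt_mem_coe⟩
  refine ⟨Chamber.ofMem x hx, Chamber.eq_iff_pt_mem.2 ?_⟩
  rw [e.coe_singleton_ker] at hxe
  rw [coe_epsC, mem_ofPred_eq, mul_comm]
  exact pos_mul_of_pos_mul_of_pos_mul hxe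
    (pos_mul_of_mem_connectedComponentIn hH (Chamber.pt_ofMem_mem hx))

lemma Chamber.ext_of_epsC (h𝒜 : IsCentralArrangement 𝒜) {c d : Chamber 𝒜}
    (h : ∀ H (hH : H ∈ 𝒜), epsC H hH c = epsC H hH d) : c = d := by
  set s : Set V := ⋂ (H) (hH : H ∈ 𝒜), (epsC H hH c : Set V)
  have hconv : Convex ℝ s := convex_iInter fun H => convex_iInter fun hH => by
    obtain ⟨g, -, rfl⟩ := h𝒜 H hH
    rw [coe_epsC]
    exact convex_setOf_pos_mul g _
  have hsub : s ⊆ arrComplement 𝒜 := fun z hz H hH =>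
    connectedComponentIn_subset _ _ (mem_iInter₂.1 hz H hH) H (Finset.mem_singleton_self H)
  have hc : c.pt ∈ s := mem_iInter₂.2 fun H hH => pt_mem_epsC hH c
  have hd : d.pt ∈ s := mem_iInter₂.2 fun H hH => h H hH ▸ pt_mem_epsC hH d
  rw [Chamber.eq_iff_pt_mem, c.coe_eq]
  exact hconv.isPreconnected.subset_connectedComponentIn hc hsub hd

lemma SatisfiesIIAone.epsC_swap_or_fix (h𝒜 : IsCentralArrangement 𝒜)
    {f : Chamber 𝒜 → Chamber 𝒜} (hIIA : SatisfiesIIAone f) (hf : f.Surjective)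
    {H : Submodule ℝ V} (hH : H ∈ 𝒜) :
    (∃ φ : Chamber ({H} : Finset (Submodule ℝ V)) → Chamber ({H} : Finset (Submodule ℝ V)),
        (∀ c, φ (epsC H hH c) = epsC H hH (f c)) ∧ ∀ d, φ d ≠ d) ∨
      ∀ c, epsC H hH (f c) = epsC H hH c := by
  obtain ⟨φ, hφ⟩ := hIIA H hH
  by_cases hfix : ∃ d, φ d = d
  · right
    have hφs : φ.Surjective := fun d => by
      obtain ⟨c, rfl⟩ := ((epsC_surjective h𝒜 hH).comp hf) d
      exact ⟨_, hφ c⟩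
    obtain ⟨d, hd⟩ := hfix
    have hid := hφs.eq_id_of_isFixedPt (fun _ _ => Chamber.eq_or_eq_of_ne (h𝒜 H hH)) hd
    intro c
    rw [← hφ c, hid, id]
  · exact Or.inl ⟨φ, hφ, fun d hd => hfix ⟨d, hd⟩⟩

lemma exists_chamber_forall_epsC_eq_of_inf_erase_le [DecidableEq (Submodule ℝ V)]
    (h𝒜 : IsCentralArrangement 𝒜) {H : Submodule ℝ V} (hH : H ∈ 𝒜)
    (hinf : (𝒜.erase H).inf id ≤ H) :
    ∃ c : Chamber 𝒜, ∀ d : Chamber 𝒜,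
      (∀ H' (hH' : H' ∈ 𝒜), H' ≠ H → epsC H' hH' d = epsC H' hH' c) →
        epsC H hH d = epsC H hH c := by
  obtain ⟨g, hg0, hgH⟩ := h𝒜 H hH
  have hmem (i : 𝒜.erase H) : (i : Submodule ℝ V) ∈ 𝒜 := Finset.mem_of_mem_erase i.2
  choose L _ hL using fun i : 𝒜.erase H => h𝒜 i (hmem i)
  have hker : ⨅ i, LinearMap.ker (L i) ≤ LinearMap.ker g := by
    rw [hgH]
    exact le_trans (Finset.le_inf fun H' hH' => iInf_le_of_le ⟨H', hH'⟩ (hL ⟨H', hH'⟩).le) hinf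
  obtain ⟨U, hUo, hUne, hU⟩ := exists_isOpen_forall_pos_of_iInf_ker_le_ker hg0 hker
  obtain ⟨x, hxU, hx⟩ := (dense_arrComplement h𝒜).inter_open_nonempty U hUo hUne
  set c := Chamber.ofMem x hx
  have hxc (i : 𝒜.erase H) : 0 < L i x * L i c.pt :=
    pos_mul_of_mem_connectedComponentIn ((hL i).symm ▸ hmem i) (Chamber.pt_ofMem_mem hx)
  have hpos (y : V) (hy : ∀ i, 0 < L i c.pt * L i y) : 0 < g y :=
    hU x hxU y fun i => pos_mul_of_pos_mul_of_pos_mul (hxc i) (hy i)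
  refine ⟨c, fun d hd => (epsC_eq_epsC_iff hH hgH).2 (mul_pos (hpos d.pt fun i => ?_)
    (hpos c.pt fun i => (epsC_eq_epsC_iff (hmem i) (hL i)).1 rfl))⟩
  rw [mul_comm]
  exact (epsC_eq_epsC_iff (hmem i) (hL i)).1 (hd i (hmem i) (Finset.ne_of_mem_erase i.2))

end

open Classical in
theorem hamming_distance_from_id_ge_two_general
    {V : Type*} [NormedAddCommGroup V] [NormedSpace ℝ V] [FiniteDimensional ℝ V]
    (𝒜 : Finset (Submodule ℝ V)) (h𝒜 : IsCentralArrangement 𝒜)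
    (hnosplit : ¬ ∃ H ∈ 𝒜, arrRank 𝒜 = arrRank (𝒜.erase H) + 1)
    (f : Chamber 𝒜 → Chamber 𝒜) (hbij : Function.Bijective f)
    (hIIA : SatisfiesIIAone f) (hne : f ≠ id) :
    ∃ (H₁ : Submodule ℝ V) (hH₁ : H₁ ∈ 𝒜) (H₂ : Submodule ℝ V) (hH₂ : H₂ ∈ 𝒜),
      H₁ ≠ H₂ ∧
      (∃ φ : Chamber ({H₁} : Finset (Submodule ℝ V)) →
             Chamber ({H₁} : Finset (Submodule ℝ V)),
        (∀ c : Chamber 𝒜, φ (epsC H₁ hH₁ c) = epsC H₁ hH₁ (f c)) ∧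
        ∀ d, φ d ≠ d) ∧
      (∃ φ : Chamber ({H₂} : Finset (Submodule ℝ V)) →
             Chamber ({H₂} : Finset (Submodule ℝ V)),
        (∀ c : Chamber 𝒜, φ (epsC H₂ hH₂ c) = epsC H₂ hH₂ (f c)) ∧
        ∀ d, φ d ≠ d) := by
  obtain ⟨c₀, hc₀⟩ : ∃ c₀, f c₀ ≠ c₀ := not_forall.1 fun h => hne (funext h)
  obtain ⟨H₁, hH₁, hsep⟩ : ∃ H₁, ∃ hH₁ : H₁ ∈ 𝒜, epsC H₁ hH₁ (f c₀) ≠ epsC H₁ hH₁ c₀ := by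
    by_contra! h
    exact hc₀ (Chamber.ext_of_epsC h𝒜 h)
  have hswap₁ := (hIIA.epsC_swap_or_fix h𝒜 hbij.2 hH₁).resolve_right fun h => hsep (h c₀)
  by_contra hgoal
  have hfix (H : Submodule ℝ V) (hH : H ∈ 𝒜) (hHH₁ : H ≠ H₁) (c : Chamber 𝒜) :
      epsC H hH (f c) = epsC H hH c :=
    (hIIA.epsC_swap_or_fix h𝒜 hbij.2 hH).resolve_left
      (fun hswap => hgoal ⟨H₁, hH₁, H, hH, hHH₁.symm, hswap₁, hswap⟩) c
  have hinf : (𝒜.erase H₁).inf id ≤ H₁ := by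
    by_contra h
    exact hnosplit ⟨H₁, hH₁, arrRank_eq_arrRank_erase_add_one (h𝒜 H₁ hH₁) hH₁ h⟩
  obtain ⟨c, hc⟩ := exists_chamber_forall_epsC_eq_of_inf_erase_le h𝒜 hH₁ hinf
  obtain ⟨φ, hφ, hφne⟩ := hswap₁
  exact hφne _ ((hφ c).trans (hc (f c) fun H hH hHH₁ => hfix H hH hHH₁ c))

open Classical in
/-- If `|𝒜| ≥ 3` and no `H ∈ 𝒜` satisfies `𝒜 = (𝒜 − {H}) ⊎ {H}` (i.e. no `H`
with `r(𝒜) = r(𝒜 − {H}) + 1`; in particular if `𝒜` is indecomposable), then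
every bijection `f : Ch(𝒜) → Ch(𝒜)` satisfying IIA other than the identity is
at Hamming distance at least `2` from the identity: at least two hyperplanes
`H ∈ 𝒜` have associated map `φ_H` equal to the transposition of `Ch({H})`. -/
theorem hamming_distance_from_id_ge_two
    {V : Type*} [NormedAddCommGroup V] [NormedSpace ℝ V] [FiniteDimensional ℝ V]
    (𝒜 : Finset (Submodule ℝ V)) (h𝒜 : IsCentralArrangement 𝒜)
    (hcard : 3 ≤ 𝒜.card)
    (hnosplit : ¬ ∃ H ∈ 𝒜, arrRank 𝒜 = arrRank (𝒜.erase H) + 1)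
    (f : Chamber 𝒜 → Chamber 𝒜) (hbij : Function.Bijective f)
    (hIIA : SatisfiesIIAone f) (hne : f ≠ id) :
    ∃ (H₁ : Submodule ℝ V) (hH₁ : H₁ ∈ 𝒜) (H₂ : Submodule ℝ V) (hH₂ : H₂ ∈ 𝒜),
      H₁ ≠ H₂ ∧
      (∃ φ : Chamber ({H₁} : Finset (Submodule ℝ V)) →
             Chamber ({H₁} : Finset (Submodule ℝ V)),
        (∀ c : Chamber 𝒜, φ (epsC H₁ hH₁ c) = epsC H₁ hH₁ (f c)) ∧
        ∀ d, φ d ≠ d) ∧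
      (∃ φ : Chamber ({H₂} : Finset (Submodule ℝ V)) →
             Chamber ({H₂} : Finset (Submodule ℝ V)),
        (∀ c : Chamber 𝒜, φ (epsC H₂ hH₂ c) = epsC H₂ hH₂ (f c)) ∧
        ∀ d, φ d ≠ d) :=
  hamming_distance_from_id_ge_two_general 𝒜 h𝒜 hnosplit f hbij hIIA hne
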